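/- Let C be a circle in the Euclidean plane and let a, b, c, d be four points lying on C in that cyclic order (clockwise or anticlockwise). Then every closed disc containing a and c also contains b or d. -/

import Mathlib

/-!
For a disc of radius `s` centred at `z`, the function `f θ = s ^ 2 - dist (o + r e^{iθ}) z ^ 2`
has the form `m + p cos θ + q sin θ`, and (for `s ≥ 0`) the circle point at angle `θ` lies in the
disc iff `f θ ≥ 0`. The values of such a function at four angles satisfy a linear relation whose
coefficients are, with alternating signs, the oriented areas of the triangles formed by the other
three points. For points in cyclic order all these areas are positive, so `f` cannot be
nonnegative at `a` and `c` while negative at `b` and `d`.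
-/

open Real Complex

/-- Twice the oriented area of the triangle with vertices `e^{iα}`, `e^{iβ}`, `e^{iγ}`. -/
noncomputable def cyclicDet (α β γ : ℝ) : ℝ :=
  Real.sin (β - α) + Real.sin (γ - β) - Real.sin (γ - α)

theorem cyclicDet_eq_mul_sin (α β γ : ℝ) :
    cyclicDet α β γ =
      4 * Real.sin ((β - α) / 2) * Real.sin ((γ - β) / 2) * Real.sin ((γ - α) / 2) := by
  set x := (β - α) / 2
  set y := (γ - β) / 2
  have hγα : (γ - α) / 2 = x + y := by ring
  rw [cyclicDet, hγα, show β - α = 2 * x by ring, show γ - β = 2 * y by ring,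
    show γ - α = 2 * (x + y) by ring, Real.sin_two_mul, Real.sin_two_mul, Real.sin_two_mul,
    Real.sin_add, Real.cos_add]
  linear_combination (-2 * Real.sin y * Real.cos y) * Real.sin_sq_add_cos_sq x
    + (-2 * Real.sin x * Real.cos x) * Real.sin_sq_add_cos_sq y

theorem cyclicDet_pos {α β γ : ℝ} (hαβ : α < β) (hβγ : β < γ) (hγα : γ < α + 2 * π) :
    0 < cyclicDet α β γ := by
  have sin_half_pos {u v : ℝ} (huv : u < v) (hvu : v < u + 2 * π) : 0 < Real.sin ((v - u) / 2) :=
    Real.sin_pos_of_pos_of_lt_pi (by linarith) (by linarith)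
  rw [cyclicDet_eq_mul_sin]
  have := sin_half_pos hαβ (by linarith)
  have := sin_half_pos hβγ (by linarith)
  have := sin_half_pos (hαβ.trans hβγ) hγα
  positivity

theorem cyclicDet_relation {f : ℝ → ℝ} {m p q : ℝ}
    (hf : ∀ θ, f θ = m + p * Real.cos θ + q * Real.sin θ) (α β γ δ : ℝ) :
    cyclicDet β γ δ * f α - cyclicDet α γ δ * f β + cyclicDet α β δ * f γ
      - cyclicDet α β γ * f δ = 0 := by
  simp only [hf, cyclicDet, Real.sin_sub]
  ring

theorem nonneg_or_nonneg_of_cyclic {f : ℝ → ℝ} {m p q : ℝ}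
    (hf : ∀ θ, f θ = m + p * Real.cos θ + q * Real.sin θ) {α β γ δ : ℝ}
    (hαβ : α < β) (hβγ : β < γ) (hγδ : γ < δ) (hδα : δ < α + 2 * π)
    (hα : 0 ≤ f α) (hγ : 0 ≤ f γ) : 0 ≤ f β ∨ 0 ≤ f δ := by
  by_contra! h
  have := cyclicDet_relation hf α β γ δ
  have := cyclicDet_pos hβγ hγδ (by linarith : δ < β + 2 * π)
  have := cyclicDet_pos (hαβ.trans hβγ) hγδ hδα
  have := cyclicDet_pos hαβ (hβγ.trans hγδ) hδα
  have := cyclicDet_pos hαβ hβγ (by linarith : γ < α + 2 * π)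
  nlinarith [h.1, h.2]

theorem dist_circle_point_sq (o z : ℂ) (r θ : ℝ) :
    dist (o + r * exp (θ * I)) z ^ 2 =
      ‖o - z‖ ^ 2 + r ^ 2 + 2 * r * ((o - z).re * Real.cos θ + (o - z).im * Real.sin θ) := by
  rw [Complex.dist_eq, Complex.sq_norm, Complex.sq_norm, Complex.normSq_apply,
    Complex.normSq_apply]
  simp only [Complex.sub_re, Complex.sub_im, Complex.add_re, Complex.add_im, Complex.mul_re,
    Complex.mul_im, Complex.ofReal_re, Complex.ofReal_im, exp_ofReal_mul_I_re,
    exp_ofReal_mul_I_im, zero_mul, sub_zero, add_zero]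
  linear_combination r ^ 2 * Real.sin_sq_add_cos_sq θ

theorem four_point_circle_lemma_general (o : ℂ) (r : ℝ)
    (θa θb θc θd : ℝ) (hab : θa < θb) (hbc : θb < θc) (hcd : θc < θd)
    (hda : θd < θa + 2 * Real.pi)
    (a b c d : ℂ)
    (ha : a = o + (r : ℂ) * Complex.exp ((θa : ℂ) * Complex.I))
    (hb : b = o + (r : ℂ) * Complex.exp ((θb : ℂ) * Complex.I))
    (hc : c = o + (r : ℂ) * Complex.exp ((θc : ℂ) * Complex.I))
    (hd : d = o + (r : ℂ) * Complex.exp ((θd : ℂ) * Complex.I))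
    (z : ℂ) (s : ℝ)
    (haD : a ∈ Metric.closedBall z s) (hcD : c ∈ Metric.closedBall z s) :
    b ∈ Metric.closedBall z s ∨ d ∈ Metric.closedBall z s := by
  have hs : 0 ≤ s := dist_nonneg.trans (Metric.mem_closedBall.1 haD)
  set f : ℝ → ℝ := fun θ ↦ s ^ 2 - dist (o + r * exp (θ * I)) z ^ 2
  have hf (θ : ℝ) : f θ = s ^ 2 - ‖o - z‖ ^ 2 - r ^ 2 + -(2 * r * (o - z).re) * Real.cos θ
      + -(2 * r * (o - z).im) * Real.sin θ := by
    simp only [f, dist_circle_point_sq]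
    ring
  have mem_iff (θ : ℝ) : o + r * exp (θ * I) ∈ Metric.closedBall z s ↔ 0 ≤ f θ := by
    rw [Metric.mem_closedBall, ← sq_le_sq₀ dist_nonneg hs, sub_nonneg]
  subst ha hb hc hd
  rw [mem_iff, mem_iff] at *
  exact nonneg_or_nonneg_of_cyclic hf hab hbc hcd hda haD hcD

/-- Four points on a circle in cyclic order: every closed disc containing the
first and third also contains the second or the fourth. We model the Euclidean
plane as `ℂ` and the cyclic order via strictly increasing angles within one turn. -/
theorem four_point_circle_lemma (o : ℂ) (r : ℝ) (hr : 0 < r)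
    (θa θb θc θd : ℝ) (hab : θa < θb) (hbc : θb < θc) (hcd : θc < θd)
    (hda : θd < θa + 2 * Real.pi)
    (a b c d : ℂ)
    (ha : a = o + (r : ℂ) * Complex.exp ((θa : ℂ) * Complex.I))
    (hb : b = o + (r : ℂ) * Complex.exp ((θb : ℂ) * Complex.I))
    (hc : c = o + (r : ℂ) * Complex.exp ((θc : ℂ) * Complex.I))
    (hd : d = o + (r : ℂ) * Complex.exp ((θd : ℂ) * Complex.I))
    (z : ℂ) (s : ℝ)
    (haD : a ∈ Metric.closedBall z s) (hcD : c ∈ Metric.closedBall z s) :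
    b ∈ Metric.closedBall z s ∨ d ∈ Metric.closedBall z s :=
  four_point_circle_lemma_general o r θa θb θc θd hab hbc hcd hda a b c d ha hb hc hd z s haD hcD
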